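/- Let A and B be n×n positive semidefinite complex matrices. Then tr(A+B) − tr((A^2 + B^2)^{1/2}) ≤ (tr(A+B) − ‖A − B‖_1)/2. -/

import Mathlib

open scoped ComplexOrder

/-- The matrix square root of a positive semidefinite matrix, as `Matrix.PosSemidef.sqrt` was
defined in Mathlib (Dec 2024); it was removed from Mathlib since. -/
noncomputable def Matrix.PosSemidef.sqrt {n 𝕜 : Type*} [Fintype n] [RCLike 𝕜] [DecidableEq n]
    {A : Matrix n n 𝕜} (hA : A.PosSemidef) : Matrix n n 𝕜 :=
  hA.1.eigenvectorUnitary.1 * Matrix.diagonal ((↑) ∘ Real.sqrt ∘ hA.1.eigenvalues) *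
    (star hA.1.eigenvectorUnitary : Matrix n n 𝕜)

/-- The trace norm `‖Z‖₁ = tr ((Zᴴ Z)^{1/2})` of a square complex matrix, i.e. the sum of its
singular values. -/
noncomputable def traceNorm {n : ℕ} (Z : Matrix (Fin n) (Fin n) ℂ) : ℝ :=
  ((Matrix.posSemidef_conjTranspose_mul_self Z).sqrt).trace.re

/-!
Put `M = (A² + B²)^{1/2}`. Since the square root is operator monotone, `A ≤ M` and `B ≤ M`.
Let `U` be the sign of `A - B`, so that `-1 ≤ U ≤ 1` and `U (A - B) = |A - B|`. The trace of a
product of positive semidefinite matrices is nonnegative, hence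
`0 ≤ tr ((1 + U) (M - A)) + tr ((1 - U) (M - B)) = 2 tr M - tr (A + B) - ‖A - B‖₁`.
-/

open scoped MatrixOrder

lemma SignType.neg_one_le_cast {α : Type*} [Ring α] [PartialOrder α] [IsOrderedRing α]
    (s : SignType) : (-1 : α) ≤ s := by
  cases s <;> simp [neg_le_self zero_le_one]

lemma SignType.cast_le_one {α : Type*} [Ring α] [PartialOrder α] [IsOrderedRing α]
    (s : SignType) : (s : α) ≤ 1 := by
  cases s <;> simp [neg_le_self zero_le_one]

lemma CFC.le_sqrt_sq_add {A : Type*} [CStarAlgebra A] [PartialOrder A] [StarOrderedRing A]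
    {a c : A} (ha : 0 ≤ a) (hc : 0 ≤ c) : a ≤ sqrt (a ^ 2 + c) := by
  calc a = sqrt (a ^ 2) := (sqrt_sq a ha).symm
    _ ≤ sqrt (a ^ 2 + c) := sqrt_le_sqrt _ _ (le_add_of_nonneg_right hc)

namespace Matrix

variable {ι 𝕜 : Type*} [Fintype ι] [DecidableEq ι] [RCLike 𝕜]

lemma PosSemidef.sqrt_eq_cfcSqrt {A : Matrix ι ι 𝕜} (hA : A.PosSemidef) :
    hA.sqrt = CFC.sqrt A := by
  rw [CFC.sqrt_eq_real_sqrt A hA.nonneg,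
    cfcₙ_eq_cfc (hf := Real.continuous_sqrt.continuousOn) (hf0 := Real.sqrt_zero),
    hA.1.cfc_eq, IsHermitian.cfc, Unitary.conjStarAlgAut_apply]
  rfl

lemma trace_mul_nonneg {P Q : Matrix ι ι 𝕜} (hP : 0 ≤ P) (hQ : 0 ≤ Q) :
    0 ≤ (P * Q).trace := by
  have hstar : star (CFC.sqrt P) = CFC.sqrt P := (CFC.sqrt_nonneg P).isSelfAdjoint.star_eq
  calc (0 : 𝕜) ≤ (star (CFC.sqrt P) * Q * CFC.sqrt P).trace :=
        (nonneg_iff_posSemidef.1 (star_left_conjugate_nonneg hQ _)).trace_nonneg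
    _ = (P * Q).trace := by
        rw [hstar, trace_mul_cycle, CFC.sqrt_mul_sqrt_self P hP]

lemma trace_add_add_trace_mul_sub_le {A B M U : Matrix ι ι 𝕜} (hAM : A ≤ M) (hBM : B ≤ M)
    (hU₁ : -1 ≤ U) (hU₂ : U ≤ 1) :
    (A + B).trace + (U * (A - B)).trace ≤ 2 * M.trace := by
  have h₁ : 0 ≤ ((1 + U) * (M - A)).trace :=
    trace_mul_nonneg (neg_le_iff_add_nonneg'.1 hU₁) (sub_nonneg.2 hAM)
  have h₂ : 0 ≤ ((1 - U) * (M - B)).trace :=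
    trace_mul_nonneg (sub_nonneg.2 hU₂) (sub_nonneg.2 hBM)
  have hsum : (1 + U) * (M - A) + (1 - U) * (M - B) = M + M - (A + B) - U * (A - B) := by
    noncomm_ring
  have := add_nonneg h₁ h₂
  rwa [← trace_add, hsum, trace_sub, trace_sub, trace_add, ← two_mul, sub_sub,
    sub_nonneg] at this

lemma IsHermitian.exists_mul_eq_cfcAbs {D : Matrix ι ι 𝕜} (hD : D.IsHermitian) :
    ∃ U : Matrix ι ι 𝕜, -1 ≤ U ∧ U ≤ 1 ∧ U * D = CFC.abs D := by
  have hsign : ContinuousOn (fun x : ℝ => (SignType.sign x : ℝ)) (spectrum ℝ D) :=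
    D.finite_real_spectrum.continuousOn _
  refine ⟨cfc (fun x : ℝ => (SignType.sign x : ℝ)) D, ?_,
    cfc_le_one _ D fun x _ => SignType.cast_le_one _, ?_⟩
  · simpa using algebraMap_le_cfc _ (-1 : ℝ) D fun x _ => SignType.neg_one_le_cast _
  · rw [CFC.abs_eq_cfc_norm D hD.isSelfAdjoint]
    nth_rw 2 [← cfc_id' ℝ D]
    rw [← cfc_mul _ _ D]
    simp_rw [sign_mul_self, Real.norm_eq_abs]

end Matrix

lemma traceNorm_eq_re_trace_cfcAbs {n : ℕ} (Z : Matrix (Fin n) (Fin n) ℂ) :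
    traceNorm Z = (CFC.abs Z).trace.re := by
  rw [traceNorm, Matrix.PosSemidef.sqrt_eq_cfcSqrt]
  rfl

/-- For positive semidefinite `A`, `B`:
`tr (A+B) − tr ((A² + B²)^{1/2}) ≤ (tr (A+B) − ‖A − B‖₁) / 2`. -/
theorem trace_sub_trace_sqrt_le
    {n : ℕ} (A B : Matrix (Fin n) (Fin n) ℂ)
    (hA : A.PosSemidef) (hB : B.PosSemidef) :
    (A + B).trace.re - (((hA.pow 2).add (hB.pow 2)).sqrt).trace.re ≤
      ((A + B).trace.re - traceNorm (A - B)) / 2 := by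
  rw [Matrix.PosSemidef.sqrt_eq_cfcSqrt, traceNorm_eq_re_trace_cfcAbs]
  obtain ⟨U, hU₁, hU₂, hUD⟩ := (hA.1.sub hB.1).exists_mul_eq_cfcAbs
  have hAM : A ≤ CFC.sqrt (A ^ 2 + B ^ 2) := by
    open scoped Matrix.Norms.L2Operator in
    exact CFC.le_sqrt_sq_add hA.nonneg (hB.pow 2).nonneg
  have hBM : B ≤ CFC.sqrt (A ^ 2 + B ^ 2) := by
    open scoped Matrix.Norms.L2Operator in
    simpa [add_comm] using CFC.le_sqrt_sq_add hB.nonneg (hA.pow 2).nonneg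
  have key := Matrix.trace_add_add_trace_mul_sub_le hAM hBM hU₁ hU₂
  rw [hUD] at key
  have := (Complex.le_def.1 key).1
  simp only [Complex.add_re, Complex.mul_re, Complex.re_ofNat, Complex.im_ofNat, zero_mul,
    sub_zero] at this
  linarith
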